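/- (Bounds on the rotated value function, eq. (21).) Let Assumptions 1–4 hold, let (x_s,u_s)∈Z be a steady-state (f(x_s,u_s)=x_s, h_s:=h(x_s,u_s)≤0 componentwise). Then: (i) under strict dissipativity, for every (x,H)∈X×𝕳, every N and every u∈U^N(x,H), J̃_N(x,u) ≥ Σ_{k=0}^{N−1} ρ(‖(x_u(k,x)−x_s, u(k)−u_s)‖); in particular J̃*_N(x,H) ≥ ρ(‖(x−x_s, ũ*_{N,x,H}(0)−u_s)‖) whenever the rotated infimum is attained by ũ*_{N,x,H}; and (ii) there exists α₇∈K∞ such that J̃*_N(x,H) ≤ α₇(‖x−x_s‖ + ‖H−H^s‖₁) for all (x,H)∈X×𝕳 and all N∈ℕ. -/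
import Mathlib


open Finset Filter
open scoped Classical

noncomputable section

namespace EMPC

abbrev Vec (n : ℕ) : Type := EuclideanSpace ℝ (Fin n)

variable {n m p : ℕ}

/-- Trajectory of the discrete-time system `x(k+1) = f(x(k), u(k))`. -/
def traj (f : Vec n → Vec m → Vec n) (x : Vec n) (u : ℕ → Vec m) : ℕ → Vec n
  | 0 => x
  | k + 1 => f (traj f x u k) (u k)

/-- Open-loop cost `J_N(x,u)`. -/
def cost (f : Vec n → Vec m → Vec n) (ℓ : Vec n → Vec m → ℝ) (x : Vec n)
    (u : ℕ → Vec m) (N : ℕ) : ℝ :=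
  ∑ k ∈ Finset.range N, ℓ (traj f x u k) (u k)

/-- Admissibility `u ∈ U^N(x,H)` for the transient average constrained problem. -/
def Admissible (f : Vec n → Vec m → Vec n) (h : Vec n → Vec m → Vec p)
    (Z : Set (Vec n × Vec m)) (T N : ℕ) (x : Vec n) (H : ℕ → Vec p)
    (u : ℕ → Vec m) : Prop :=
  (∀ k < N, (traj f x u k, u k) ∈ Z) ∧
  (∀ j ∈ Finset.Icc 1 (T - 1), ∀ i : Fin p,
    (∑ l ∈ Finset.Icc j (T - 1), H l i)
      + ∑ k ∈ Finset.range j, h (traj f x u k) (u k) i ≤ 0) ∧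
  (∀ s : ℕ, s + T ≤ N → ∀ i : Fin p,
    ∑ k ∈ Finset.Ico s (s + T), h (traj f x u k) (u k) i ≤ 0)

/-- Class `K∞` comparison functions. -/
def KInf (α : ℝ → ℝ) : Prop :=
  ContinuousOn α (Set.Ici 0) ∧ StrictMonoOn α (Set.Ici 0) ∧ α 0 = 0 ∧
    Tendsto α atTop atTop

/-- Class `L_ℕ`: decreasing functions on ℕ with limit 0. -/
def LN (δ : ℕ → ℝ) : Prop :=
  Antitone δ ∧ (∀ k, 0 ≤ δ k) ∧ Tendsto δ atTop (nhds 0)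

/-- Class `KLS`. -/
def KLS (β : ℝ → ℕ → ℝ) : Prop :=
  (∀ k : ℕ, ContinuousOn (fun r => β r k) (Set.Ici 0) ∧
    StrictMonoOn (fun r => β r k) (Set.Ici 0) ∧ β 0 k = 0) ∧
  (∀ r : ℝ, 0 ≤ r → LN (fun k => β r k)) ∧
  (∀ r : ℝ, 0 ≤ r → Summable (fun k => β r k)) ∧
  (ContinuousOn (fun r => ∑' k, β r k) (Set.Ici 0) ∧
    StrictMonoOn (fun r => ∑' k, β r k) (Set.Ici 0) ∧ (∑' k, β 0 k) = 0)

/-- Class `KL`. -/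
def KLcl (β : ℝ → ℝ → ℝ) : Prop :=
  ContinuousOn (fun q : ℝ × ℝ => β q.1 q.2) (Set.Ici 0 ×ˢ Set.Ici 0) ∧
  (∀ s : ℝ, 0 ≤ s → StrictMonoOn (fun r => β r s) (Set.Ici 0) ∧ β 0 s = 0) ∧
  (∀ r : ℝ, 0 ≤ r → AntitoneOn (fun s => β r s) (Set.Ici 0) ∧
    Tendsto (fun s => β r s) atTop (nhds 0)) ∧
  (∀ r s : ℝ, 0 ≤ r → 0 ≤ s → 0 ≤ β r s)

/-- ℓ¹-norm of a vector. -/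
def l1 (v : Vec p) : ℝ := ∑ i, |v i|

/-- `Ĥ_k = Σ_i max{H_{ik}, 0}`. -/
def hatCol (H : ℕ → Vec p) (k : ℕ) : ℝ := ∑ i, max (H k i) 0

/-- Norm-like measure `⟨H⟩ = max_{k ∈ {1,…,T-1}} Ĥ_k`. -/
def measH (T : ℕ) (H : ℕ → Vec p) : ℝ := ⨆ k ∈ Finset.Icc 1 (T - 1), hatCol H k

/-- `‖H‖₁ = max_{k ∈ {1,…,T-1}} ‖H_k‖₁`. -/
def norm1H (T : ℕ) (H : ℕ → Vec p) : ℝ := ⨆ k ∈ Finset.Icc 1 (T - 1), l1 (H k)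

/-- The set `𝕳` of feasible stored outputs. -/
def HSet (h : Vec n → Vec m → Vec p) (Z : Set (Vec n × Vec m)) (T : ℕ) :
    Set (ℕ → Vec p) :=
  {H | ∀ k ∈ Finset.Icc 1 (T - 1), ∀ i : Fin p,
    sInf ((fun z : Vec n × Vec m => h z.1 z.2 i) '' Z) ≤ H k i ∧
    H k i ≤ sSup ((fun z : Vec n × Vec m => h z.1 z.2 i) '' Z)}

/-- Value function `J*_N(x,H)`. -/
def Jstar (f : Vec n → Vec m → Vec n) (ℓ : Vec n → Vec m → ℝ)
    (h : Vec n → Vec m → Vec p) (Z : Set (Vec n × Vec m)) (T N : ℕ)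
    (x : Vec n) (H : ℕ → Vec p) : ℝ :=
  sInf ((fun u => cost f ℓ x u N) '' {u | Admissible f h Z T N x H u})

/-- Rotated stage cost `ℓ̃`. -/
def rot (f : Vec n → Vec m → Vec n) (ℓ : Vec n → Vec m → ℝ)
    (h : Vec n → Vec m → Vec p) (ℓs : ℝ) (lam : Vec n → ℝ) (lb : Vec p)
    (x : Vec n) (u : Vec m) : ℝ :=
  ℓ x u - ℓs + lam x - lam (f x u) + ∑ i, lb i * h x u i

/-- Rotated open-loop cost. -/
def rcost (f : Vec n → Vec m → Vec n) (ℓ : Vec n → Vec m → ℝ)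
    (h : Vec n → Vec m → Vec p) (ℓs : ℝ) (lam : Vec n → ℝ) (lb : Vec p)
    (x : Vec n) (u : ℕ → Vec m) (N : ℕ) : ℝ :=
  ∑ k ∈ Finset.range N, rot f ℓ h ℓs lam lb (traj f x u k) (u k)

/-- Rotated value function `J̃*_N(x,H)`. -/
def Jtstar (f : Vec n → Vec m → Vec n) (ℓ : Vec n → Vec m → ℝ)
    (h : Vec n → Vec m → Vec p) (Z : Set (Vec n × Vec m)) (T : ℕ)
    (ℓs : ℝ) (lam : Vec n → ℝ) (lb : Vec p) (N : ℕ)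
    (x : Vec n) (H : ℕ → Vec p) : ℝ :=
  sInf ((fun u => rcost f ℓ h ℓs lam lb x u N) '' {u | Admissible f h Z T N x H u})

/-- `k_{T,N} = ⌈N/T⌉·T − N`. -/
def kTN (T N : ℕ) : ℕ := ((N + T - 1) / T) * T - N

/-- The stored-output matrix along a trajectory, starting at time `d`
(column `k ∈ {1,…,T-1}` is the auxiliary output at time `d + k - 1`). -/
def storedH (f : Vec n → Vec m → Vec n) (h : Vec n → Vec m → Vec p)
    (x : Vec n) (u : ℕ → Vec m) (d : ℕ) : ℕ → Vec p :=
  fun k => h (traj f x u (d + k - 1)) (u (d + k - 1))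

/-- Local controllability (Assumption 4). -/
def LocCtrl (f : Vec n → Vec m → Vec n) (h : Vec n → Vec m → Vec p)
    (Z : Set (Vec n × Vec m)) (T : ℕ) (xs : Vec n) (δc Eh : ℝ) (d : ℕ)
    (γx γu : ℝ → ℝ) : Prop :=
  ∀ (xc : Vec n) (Hc : ℕ → Vec p) (uc : ℕ → Vec m),
    Admissible f h Z T (d + T) xc Hc uc →
    measH T Hc ≤ Eh →
    (∀ k ≤ d + T, ‖traj f xc uc k - xs‖ ≤ δc) →
    ∀ (N₁ : ℕ) (x₁ : Vec n) (H₁ : ℕ → Vec p) (u₁ : ℕ → Vec m),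
      d + T ≤ N₁ → x₁ ∈ Prod.fst '' Z → H₁ ∈ HSet h Z T →
      Admissible f h Z T N₁ x₁ H₁ u₁ →
      measH T (fun k => storedH f h x₁ u₁ d k - storedH f h xc uc d k) ≤ Eh →
      ‖traj f x₁ u₁ d - xs‖ ≤ δc →
      ∀ (x₂ : Vec n) (H₂ : ℕ → Vec p),
        ‖x₂ - xs‖ ≤ δc → measH T (fun k => H₂ k - Hc k) ≤ Eh →
        ∃ u₂ : ℕ → Vec m,
          Admissible f h Z T d x₂ H₂ u₂ ∧
          traj f x₂ u₂ d = traj f x₁ u₁ d ∧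
          Admissible f h Z T N₁ x₂ H₂ (fun k => if k < d then u₂ k else u₁ k) ∧
          ∀ k ≤ d,
            ‖traj f x₂ u₂ k - traj f xc uc k‖ ≤
              γx (max (‖x₂ - xc‖ + measH T (fun j => H₂ j - Hc j))
                (‖traj f x₁ u₁ d - traj f xc uc d‖ +
                  measH T (fun j => storedH f h x₁ u₁ d j - storedH f h xc uc d j))) ∧
            ‖u₂ k - uc k‖ ≤
              γu (max (‖x₂ - xc‖ + measH T (fun j => H₂ j - Hc j))
                (‖traj f x₁ u₁ d - traj f xc uc d‖ +
                  measH T (fun j => storedH f h x₁ u₁ d j - storedH f h xc uc d j)))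

/-- Shift dynamics of the stored outputs: `f_H(H, y) = [H_2, …, H_{T-1}, y]`. -/
def shiftH (T : ℕ) (H : ℕ → Vec p) (y : Vec p) : ℕ → Vec p :=
  fun k => if k + 1 < T then H (k + 1) else if k + 1 = T then y else H k

/-- Closed-loop trajectory of the extended state `χ = (x, H)` under the MPC
feedback `μ_N(x,H) = u*_{N,x,H}(0)`. -/
def clTraj (f : Vec n → Vec m → Vec n) (h : Vec n → Vec m → Vec p)
    (ustar : ℕ → Vec n → (ℕ → Vec p) → ℕ → Vec m) (N T : ℕ)
    (χ : Vec n × (ℕ → Vec p)) : ℕ → Vec n × (ℕ → Vec p)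
  | 0 => χ
  | k + 1 =>
    (f (clTraj f h ustar N T χ k).1
        (ustar N (clTraj f h ustar N T χ k).1 (clTraj f h ustar N T χ k).2 0),
      shiftH T (clTraj f h ustar N T χ k).2
        (h (clTraj f h ustar N T χ k).1
          (ustar N (clTraj f h ustar N T χ k).1 (clTraj f h ustar N T χ k).2 0)))

/-- Auxiliary: a biSup over a finset is bounded by `c ≥ 0` if all members are. -/
lemma real_biSup_le {s : Finset ℕ} {g : ℕ → ℝ} {c : ℝ} (hc : 0 ≤ c)
    (hg : ∀ i ∈ s, g i ≤ c) : (⨆ i ∈ s, g i) ≤ c := by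
  refine ciSup_le fun i => ?_
  by_cases hi : i ∈ s
  · rw [ciSup_pos hi]; exact hg i hi
  · haveI : IsEmpty (i ∈ s) := ⟨hi⟩
    rw [Real.iSup_of_isEmpty]; exact hc

lemma real_biSup_nonneg (s : Finset ℕ) (g : ℕ → ℝ) (hg : ∀ i ∈ s, 0 ≤ g i) :
    0 ≤ ⨆ i ∈ s, g i :=
  Real.iSup_nonneg fun i => Real.iSup_nonneg fun hi => hg i hi

lemma le_real_biSup {s : Finset ℕ} (g : ℕ → ℝ) {k : ℕ} (hk : k ∈ s) :
    g k ≤ ⨆ i ∈ s, g i := by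
  have hbdd : BddAbove (Set.range fun i => ⨆ _ : i ∈ s, g i) := by
    refine BddAbove.mono ?_ ((s.finite_toSet.image g).insert 0).bddAbove
    rintro y ⟨i, rfl⟩
    dsimp only
    by_cases hi : i ∈ s
    · rw [ciSup_pos (f := fun _ : i ∈ s => g i) hi]
      exact Set.mem_insert_of_mem _ ⟨i, hi, rfl⟩
    · haveI : IsEmpty (i ∈ s) := ⟨hi⟩
      rw [Real.iSup_of_isEmpty (fun _ : i ∈ s => g i)]
      exact Set.mem_insert _ _
  calc g k = ⨆ _ : k ∈ s, g k := (ciSup_pos (f := fun _ : k ∈ s => g k) hk).symm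
    _ ≤ ⨆ i ∈ s, g i := le_ciSup hbdd k

lemma l1_nonneg (v : Vec p) : 0 ≤ l1 v :=
  Finset.sum_nonneg fun i _ => abs_nonneg _

lemma hatCol_le_l1 (H : ℕ → Vec p) (k : ℕ) : hatCol H k ≤ l1 (H k) :=
  Finset.sum_le_sum fun i _ => max_le (le_abs_self _) (abs_nonneg _)

lemma norm1H_nonneg (T : ℕ) (G : ℕ → Vec p) : 0 ≤ norm1H T G :=
  real_biSup_nonneg _ _ fun i _ => l1_nonneg _

lemma measH_nonneg (T : ℕ) (G : ℕ → Vec p) : 0 ≤ measH T G :=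
  real_biSup_nonneg _ _ fun i _ =>
    Finset.sum_nonneg fun j _ => le_max_right _ _

lemma measH_le_norm1H (T : ℕ) (G : ℕ → Vec p) : measH T G ≤ norm1H T G := by
  show (⨆ k ∈ Finset.Icc 1 (T - 1), hatCol G k) ≤ norm1H T G
  refine real_biSup_le (norm1H_nonneg T G) fun k hk => ?_
  refine (hatCol_le_l1 G k).trans ?_
  show l1 (G k) ≤ ⨆ i ∈ Finset.Icc 1 (T - 1), l1 (G i)
  exact le_real_biSup (fun i => l1 (G i)) hk

theorem rotated_value_function_bounds (n m p T : ℕ) (hT : 1 ≤ T)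
    (f : Vec n → Vec m → Vec n) (ℓ : Vec n → Vec m → ℝ)
    (h : Vec n → Vec m → Vec p) (Z : Set (Vec n × Vec m)) (Lh : ℝ)
    (xs : Vec n) (us : Vec m) (lam : Vec n → ℝ) (lb : Vec p) (ρ : ℝ → ℝ)
    (δc Eh : ℝ) (d : ℕ) (γx γu : ℝ → ℝ)
    (tust : ℕ → Vec n → (ℕ → Vec p) → ℕ → Vec m)
    -- Assumption 1 (compactness and continuity)
    (hZ : IsCompact Z)
    (hfc : ∃ αf : ℝ → ℝ, KInf αf ∧ ∀ z₁ ∈ Z, ∀ z₂ ∈ Z,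
      ‖f z₁.1 z₁.2 - f z₂.1 z₂.2‖ ≤ αf ‖(z₁.1 - z₂.1, z₁.2 - z₂.2)‖)
    (halc : ∃ αl : ℝ → ℝ, KInf αl ∧ ∀ z₁ ∈ Z, ∀ z₂ ∈ Z,
      |ℓ z₁.1 z₁.2 - ℓ z₂.1 z₂.2| ≤ αl ‖(z₁.1 - z₂.1, z₁.2 - z₂.2)‖)
    (hLh : 0 < Lh)
    (hhL : ∀ z₁ ∈ Z, ∀ z₂ ∈ Z,
      ‖h z₁.1 z₁.2 - h z₂.1 z₂.2‖ ≤ Lh * ‖(z₁.1 - z₂.1, z₁.2 - z₂.2)‖)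
    -- optimal steady-state
    (hzs : (xs, us) ∈ Z) (hfix : f xs us = xs) (hhs : ∀ i, h xs us i ≤ 0)
    -- Assumption 2 (strict dissipativity)
    (hρ : KInf ρ) (hlb : ∀ i, 0 ≤ lb i) (hlam0 : lam xs = 0)
    (hlamc : ∃ αlam : ℝ → ℝ, KInf αlam ∧ ∀ x₁ ∈ Prod.fst '' Z, ∀ x₂ ∈ Prod.fst '' Z,
      |lam x₁ - lam x₂| ≤ αlam ‖x₁ - x₂‖)
    (hdiss : ∀ z ∈ Z, lam (f z.1 z.2) - lam z.1 ≤
      ℓ z.1 z.2 - ℓ xs us + (∑ i, lb i * h z.1 z.2 i) - ρ ‖(z.1 - xs, z.2 - us)‖)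
    -- Assumption 3 (asymptotic controllability)
    (hac : ∃ β₁ β₂ : ℝ → ℕ → ℝ, KLS β₁ ∧ KLS β₂ ∧
      ∀ x ∈ Prod.fst '' Z, ∀ H ∈ HSet h Z T, ∀ N : ℕ, ∃ u : ℕ → Vec m,
        Admissible f h Z T N x H u ∧ ∀ k < N,
          ℓ (traj f x u k) (u k) - ℓ xs us ≤
            β₁ ‖x - xs‖ k + β₂ (measH T (fun j => H j - h xs us)) k ∧
          rot f ℓ h (ℓ xs us) lam lb (traj f x u k) (u k) ≤
            β₁ ‖x - xs‖ k + β₂ (measH T (fun j => H j - h xs us)) k)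
    -- Assumption 4 (local controllability)
    (hδc : 0 < δc) (hEh : 0 < Eh) (hdT : T ≤ d) (hγx : KInf γx) (hγu : KInf γu)
    (hloc : LocCtrl f h Z T xs δc Eh d γx γu)
    -- the rotated value function is attained by the unique minimizer `tust`
    (htopt : ∀ (N : ℕ), ∀ x ∈ Prod.fst '' Z, ∀ H ∈ HSet h Z T,
      Admissible f h Z T N x H (tust N x H) ∧
      rcost f ℓ h (ℓ xs us) lam lb x (tust N x H) N =
        Jtstar f ℓ h Z T (ℓ xs us) lam lb N x H ∧
      ∀ u : ℕ → Vec m, Admissible f h Z T N x H u →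
        rcost f ℓ h (ℓ xs us) lam lb x u N =
          Jtstar f ℓ h Z T (ℓ xs us) lam lb N x H → ∀ k < N, u k = tust N x H k)
    :
    (∀ (x : Vec n) (H : ℕ → Vec p) (N : ℕ) (u : ℕ → Vec m),
      Admissible f h Z T N x H u →
      (∑ k ∈ Finset.range N, ρ ‖(traj f x u k - xs, u k - us)‖) ≤
        rcost f ℓ h (ℓ xs us) lam lb x u N) ∧
    (∀ x ∈ Prod.fst '' Z, ∀ H ∈ HSet h Z T, ∀ N : ℕ, 1 ≤ N →
      ρ ‖(x - xs, tust N x H 0 - us)‖ ≤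
        Jtstar f ℓ h Z T (ℓ xs us) lam lb N x H) ∧
    ∃ α₇ : ℝ → ℝ, KInf α₇ ∧ ∀ x ∈ Prod.fst '' Z, ∀ H ∈ HSet h Z T, ∀ N : ℕ,
      Jtstar f ℓ h Z T (ℓ xs us) lam lb N x H ≤
        α₇ (‖x - xs‖ + norm1H T (fun j => H j - h xs us)) := by
  obtain ⟨β₁, β₂, hβ₁, hβ₂, hctrl⟩ := hac
  have hρnn : ∀ r : ℝ, 0 ≤ r → 0 ≤ ρ r := fun r hr => by
    have := hρ.2.1.monotoneOn Set.self_mem_Ici hr hr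
    rw [hρ.2.2.1] at this; exact this
  -- Part (i)
  have key : ∀ (x : Vec n) (H : ℕ → Vec p) (N : ℕ) (u : ℕ → Vec m),
      Admissible f h Z T N x H u →
      (∑ k ∈ Finset.range N, ρ ‖(traj f x u k - xs, u k - us)‖) ≤
        rcost f ℓ h (ℓ xs us) lam lb x u N := by
    intro x H N u hu
    refine Finset.sum_le_sum fun k hk => ?_
    have hz := hdiss (traj f x u k, u k) (hu.1 k (Finset.mem_range.mp hk))
    simp only [rot]
    linarith [hz]
  refine ⟨key, ?_, ?_⟩
  -- Part (ii)
  · intro x hx H hH N hN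
    obtain ⟨hadm, heq, _⟩ := htopt N x hx H hH
    have h1 := key x H N (tust N x H) hadm
    have h0 : ρ ‖(traj f x (tust N x H) 0 - xs, tust N x H 0 - us)‖ ≤
        ∑ k ∈ Finset.range N, ρ ‖(traj f x (tust N x H) k - xs, tust N x H k - us)‖ :=
      Finset.single_le_sum
        (f := fun k => ρ ‖(traj f x (tust N x H) k - xs, tust N x H k - us)‖)
        (fun k _ => hρnn _ (norm_nonneg _)) (Finset.mem_range.mpr hN)
    have htraj0 : traj f x (tust N x H) 0 = x := rfl
    rw [htraj0] at h0
    rw [← heq]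
    exact h0.trans h1
  -- Part (iii)
  · set γ₁ : ℝ → ℝ := fun r => ∑' k, β₁ r k with hγ₁def
    set γ₂ : ℝ → ℝ := fun r => ∑' k, β₂ r k with hγ₂def
    obtain ⟨-, hβ₁ln, hβ₁sum, hγ₁c, hγ₁m, hγ₁0⟩ := hβ₁
    obtain ⟨-, hβ₂ln, hβ₂sum, hγ₂c, hγ₂m, hγ₂0⟩ := hβ₂
    refine ⟨fun r => γ₁ r + γ₂ r + r, ⟨?_, ?_, ?_, ?_⟩, ?_⟩
    · exact ((hγ₁c.add hγ₂c).add continuousOn_id)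
    · intro a ha b hb hab
      have h1 := hγ₁m ha hb hab
      have h2 := hγ₂m ha hb hab
      dsimp only
      exact add_lt_add (add_lt_add h1 h2) hab
    · show γ₁ 0 + γ₂ 0 + 0 = 0
      simp only [hγ₁def, hγ₂def]
      rw [hγ₁0, hγ₂0]; ring
    · refine tendsto_atTop_mono' atTop ?_ tendsto_id
      filter_upwards [eventually_ge_atTop (0 : ℝ)] with r hr
      have h1 : 0 ≤ γ₁ r := by
        have := hγ₁m.monotoneOn Set.self_mem_Ici hr hr
        rw [hγ₁0] at this; exact this
      have h2 : 0 ≤ γ₂ r := by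
        have := hγ₂m.monotoneOn Set.self_mem_Ici hr hr
        rw [hγ₂0] at this; exact this
      simp only [id]
      linarith
    · intro x hx H hH N
      obtain ⟨u, hu, hub⟩ := hctrl x hx H hH N
      set a := ‖x - xs‖ with hadef
      set b := measH T (fun j => H j - h xs us) with hbdef
      set s := norm1H T (fun j => H j - h xs us) with hsdef
      have ha : 0 ≤ a := norm_nonneg _
      have hb : 0 ≤ b := measH_nonneg _ _
      have hs : 0 ≤ s := norm1H_nonneg _ _
      have hbs : b ≤ s := measH_le_norm1H _ _
      -- Jtstar ≤ rcost of u
      have hmem : rcost f ℓ h (ℓ xs us) lam lb x u N ∈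
          ((fun u => rcost f ℓ h (ℓ xs us) lam lb x u N) ''
            {u | Admissible f h Z T N x H u}) := ⟨u, hu, rfl⟩
      have hbdd : BddBelow ((fun u => rcost f ℓ h (ℓ xs us) lam lb x u N) ''
          {u | Admissible f h Z T N x H u}) := by
        refine ⟨0, ?_⟩
        rintro y ⟨v, hv, rfl⟩
        refine le_trans ?_ (key x H N v hv)
        exact Finset.sum_nonneg fun k _ => hρnn _ (norm_nonneg _)
      have hJle : Jtstar f ℓ h Z T (ℓ xs us) lam lb N x H ≤
          rcost f ℓ h (ℓ xs us) lam lb x u N := csInf_le hbdd hmem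
      -- rcost bound via β's
      have hrle : rcost f ℓ h (ℓ xs us) lam lb x u N ≤ γ₁ a + γ₂ b := by
        have h1 : rcost f ℓ h (ℓ xs us) lam lb x u N ≤
            ∑ k ∈ Finset.range N, (β₁ a k + β₂ b k) :=
          Finset.sum_le_sum fun k hk => (hub k (Finset.mem_range.mp hk)).2
        have h2 : ∑ k ∈ Finset.range N, β₁ a k ≤ γ₁ a :=
          Summable.sum_le_tsum (Finset.range N) (fun k _ => (hβ₁ln a ha).2.1 k) (hβ₁sum a ha)
        have h3 : ∑ k ∈ Finset.range N, β₂ b k ≤ γ₂ b :=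
          Summable.sum_le_tsum (Finset.range N) (fun k _ => (hβ₂ln b hb).2.1 k) (hβ₂sum b hb)
        rw [Finset.sum_add_distrib] at h1
        linarith
      have has : a ≤ a + s := by linarith
      have hbas : b ≤ a + s := by linarith
      have hg1 : γ₁ a ≤ γ₁ (a + s) :=
        hγ₁m.monotoneOn ha (by positivity : (0:ℝ) ≤ a + s) has
      have hg2 : γ₂ b ≤ γ₂ (a + s) :=
        hγ₂m.monotoneOn hb (by positivity : (0:ℝ) ≤ a + s) hbas
      have : rcost f ℓ h (ℓ xs us) lam lb x u N ≤ γ₁ (a + s) + γ₂ (a + s) + (a + s) := by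
        linarith
      exact hJle.trans this


end EMPC
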